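/- Let M be a homogeneous K-linear subspace of R = K[x₁,…,x_N] admitting a d-standard cone decomposition 𝒟. Then M admits an exact d-standard cone decomposition 𝒟′ whose Macaulay constant b₀ satisfies b₀ ≥ 1 + deg 𝒟. -/

import Mathlib

open MvPolynomial
open scoped Classical

/-- A cone triple `(w, y, h)`: a multi-index `w`, a set `y` of variables, and a
polynomial `h`. -/
abbrev ConeTriple (N : ℕ) (K : Type*) [Field K] :=
  (Fin N →₀ ℕ) × Finset (Fin N) × MvPolynomial (Fin N) K

/-- The degree `|w| + deg h` of a cone triple `(w, y, h)`. -/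
def coneDeg {N : ℕ} {K : Type*} [Field K] (p : ConeTriple N K) : ℕ :=
  (∑ i, p.1 i) + p.2.2.totalDegree

/-- The cone `C(w,y,h)`: the `K`-linear span of all `x^(w+γ)·h` with `γ` supported
on `y`. -/
noncomputable def cone {N : ℕ} {K : Type*} [Field K] (p : ConeTriple N K) :
    Submodule K (MvPolynomial (Fin N) K) :=
  Submodule.span K {q | ∃ γ : Fin N →₀ ℕ, (∀ i ∉ p.2.1, γ i = 0) ∧
    q = monomial (p.1 + γ) 1 * p.2.2}

/-- A homogeneous `K`-linear subspace of the polynomial ring. -/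
def IsHomogeneousSubspace {N : ℕ} {K : Type*} [Field K]
    (M : Submodule K (MvPolynomial (Fin N) K)) : Prop :=
  ∀ f ∈ M, ∀ e : ℕ, homogeneousComponent e f ∈ M

/-- `𝒟` is a cone decomposition of `M`: each triple consists of a nonzero homogeneous
`h`, each cone is contained in `M`, and `M` is the internal direct sum of the cones. -/
def IsConeDecomp {N : ℕ} {K : Type*} [Field K] (𝒟 : Finset (ConeTriple N K))
    (M : Submodule K (MvPolynomial (Fin N) K)) : Prop :=
  (∀ p ∈ 𝒟, p.2.2 ≠ 0 ∧ ∃ e : ℕ, p.2.2.IsHomogeneous e) ∧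
  (∀ p ∈ 𝒟, cone p ≤ M) ∧
  M = (⨆ p ∈ 𝒟, cone p) ∧
  ∀ p ∈ 𝒟, Disjoint (cone p) (⨆ q ∈ 𝒟.erase p, cone q)

/-- `𝒟` is `d`-standard. -/
def IsStandardDecomp {N : ℕ} {K : Type*} [Field K] (d : ℕ)
    (𝒟 : Finset (ConeTriple N K)) : Prop :=
  (∀ p ∈ 𝒟, p.2.1.Nonempty → d ≤ coneDeg p) ∧
  ∀ p ∈ 𝒟, p.2.1.Nonempty → ∀ d', d ≤ d' → d' ≤ coneDeg p →
    ∃ q ∈ 𝒟, q.2.1.Nonempty ∧ coneDeg q = d' ∧ p.2.1.card ≤ q.2.1.card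

/-- The degree of a cone decomposition, as an element of `ℕ ∪ {−∞}`. -/
def decompDeg {N : ℕ} {K : Type*} [Field K] (𝒟 : Finset (ConeTriple N K)) :
    WithBot ℕ :=
  (𝒟.image coneDeg).max

/-- `𝒟` is exact: it is `d`-standard for some `d`, and for each degree at most one
triple `(w,y,h) ∈ 𝒟⁺` has `|w| + deg h` equal to that degree. -/
def IsExactDecomp {N : ℕ} {K : Type*} [Field K] (𝒟 : Finset (ConeTriple N K)) : Prop :=
  (∃ d, IsStandardDecomp d 𝒟) ∧
  ∀ p ∈ 𝒟, ∀ q ∈ 𝒟, p.2.1.Nonempty → q.2.1.Nonempty → coneDeg p = coneDeg q → p = q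

/-- `d_𝒟`: the least `d` such that `𝒟` is `d`-standard. -/
noncomputable def dMin {N : ℕ} {K : Type*} [Field K]
    (𝒟 : Finset (ConeTriple N K)) : ℕ :=
  sInf {d | IsStandardDecomp d 𝒟}

/-- The Macaulay constant `b_i = max {d_𝒟, 1 + deg 𝒟_i}` of `𝒟`, where
`𝒟_i = {(w,y,h) ∈ 𝒟 : #y ≥ i}` (and `b_i = d_𝒟` when `𝒟_i = ∅`). -/
noncomputable def macaulay {N : ℕ} {K : Type*} [Field K]
    (𝒟 : Finset (ConeTriple N K)) (i : ℕ) : ℕ :=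
  if (𝒟.filter fun p => i ≤ p.2.1.card).Nonempty then
    max (dMin 𝒟) (1 + (𝒟.filter fun p => i ≤ p.2.1.card).sup coneDeg)
  else dMin 𝒟

/-!
A cone `C(w, y, h)` splits as `C(w, ∅, h) ⊕ ⊕_{j ∈ y} C(w + e_j, {i ∈ y | j ≤ i}, h)`, sorting
the exponents `w + γ` by the first variable `j` on which `γ` is nonzero. The pieces of positive
dimension have degree one more than the cone, and the piece for `j = min y` keeps its full
dimension. So replacing a cone of a `d`-standard decomposition by its pieces keeps it `d`-standard,
as long as another positive cone of the same degree and at least the same dimension remains.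

At the least degree `e` at which two positive cones meet, split all of them but one of maximal
dimension. Afterwards the decomposition is exact up to degree `e`, and, going up the degrees, either
the maximal dimension `m` of the positive cones of degree `> e` drops, or it stays and the number of
those of dimension `m` drops. The degree of the decomposition never decreases, since `C(w, ∅, h)`
keeps the degree of the split cone.
-/

section ConeDecompositions

variable {K : Type*} [Field K] {N : ℕ}

section Exponents

def exponents (p : ConeTriple N K) : Set (Fin N →₀ ℕ) :=
  {v | ∃ γ : Fin N →₀ ℕ, (∀ i ∉ p.2.1, γ i = 0) ∧ v = p.1 + γ}

lemma cone_eq_map_restrictSupport (p : ConeTriple N K) :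
    cone p = (restrictSupport K (exponents p)).map (LinearMap.mulRight K p.2.2) := by
  rw [cone, restrictSupport_eq_span, Submodule.map_span, ← Set.image_comp]
  congr 1
  ext q
  simp [exponents, eq_comm]

lemma cone_mono {p q : ConeTriple N K} (hh : p.2.2 = q.2.2)
    (hpq : exponents p ⊆ exponents q) : cone p ≤ cone q := by
  rw [cone_eq_map_restrictSupport, cone_eq_map_restrictSupport, hh]
  exact Submodule.map_mono (restrictSupport_mono K hpq)

lemma disjoint_restrictSupport {E F : Set (Fin N →₀ ℕ)} (h : Disjoint E F) :
    Disjoint (restrictSupport K E) (restrictSupport K F) := by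
  simp only [restrictSupport, AddMonoidAlgebra.supported_eq_map]
  exact Submodule.disjoint_map (LinearEquiv.injective _) (Finsupp.disjoint_supported_supported h)

lemma supIndep_cone_of_pairwiseDisjoint {s : Finset (ConeTriple N K)}
    {h : MvPolynomial (Fin N) K} (hh : h ≠ 0) (hs : ∀ p ∈ s, p.2.2 = h)
    (hdisj : (s : Set (ConeTriple N K)).PairwiseDisjoint exponents) : s.SupIndep cone := by
  rw [Finset.supIndep_iff_disjoint_erase]
  intro p hp
  set E := ⋃ q ∈ s.erase p, exponents q
  have hle : (s.erase p).sup cone ≤ (restrictSupport K E).map (LinearMap.mulRight K h) :=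
    Finset.sup_le fun q hq => by
      rw [cone_eq_map_restrictSupport, hs q (Finset.mem_of_mem_erase hq)]
      exact Submodule.map_mono <|
        restrictSupport_mono K (Set.subset_biUnion_of_mem (u := exponents) hq)
  refine Disjoint.mono_right hle ?_
  rw [cone_eq_map_restrictSupport, hs p hp]
  refine Submodule.disjoint_map (mul_left_injective₀ hh) (disjoint_restrictSupport ?_)
  refine Set.disjoint_iUnion₂_right.2 fun q hq => hdisj hp ?_ (Finset.ne_of_mem_erase hq).symm
  exact Finset.mem_of_mem_erase hq

lemma monomial_mul_mem_cone {p : ConeTriple N K} {v : Fin N →₀ ℕ} (hv : v ∈ exponents p) :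
    monomial v 1 * p.2.2 ∈ cone p := by
  obtain ⟨γ, hγ, rfl⟩ := hv
  exact Submodule.subset_span ⟨γ, hγ, rfl⟩

end Exponents

section Pieces

def apex (p : ConeTriple N K) : ConeTriple N K := (p.1, ∅, p.2.2)

noncomputable def branch (p : ConeTriple N K) (j : Fin N) : ConeTriple N K :=
  (p.1 + Finsupp.single j 1, p.2.1.filter (j ≤ ·), p.2.2)

noncomputable def pieces (p : ConeTriple N K) : Finset (ConeTriple N K) :=
  insert (apex p) (p.2.1.image (branch p))

lemma mem_pieces {p π : ConeTriple N K} :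
    π ∈ pieces p ↔ π = apex p ∨ ∃ j ∈ p.2.1, branch p j = π := by
  simp [pieces]

lemma apex_mem_pieces (p : ConeTriple N K) : apex p ∈ pieces p :=
  mem_pieces.2 (Or.inl rfl)

lemma branch_mem_pieces {p : ConeTriple N K} {j : Fin N} (hj : j ∈ p.2.1) :
    branch p j ∈ pieces p :=
  mem_pieces.2 (Or.inr ⟨j, hj, rfl⟩)

lemma snd_snd_of_mem_pieces {p π : ConeTriple N K} (hπ : π ∈ pieces p) : π.2.2 = p.2.2 := by
  rcases mem_pieces.1 hπ with rfl | ⟨j, -, rfl⟩ <;> rfl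

lemma exponents_apex (p : ConeTriple N K) : exponents (apex p) = {p.1} := by
  ext v
  constructor
  · rintro ⟨γ, hγ, rfl⟩
    have : γ = 0 := Finsupp.ext fun i => hγ i (Finset.notMem_empty i)
    simp [apex, this]
  · rintro rfl
    exact ⟨0, by simp, by simp [apex]⟩

lemma exponents_branch_subset {p : ConeTriple N K} {j : Fin N} (hj : j ∈ p.2.1) :
    exponents (branch p j) ⊆ exponents p := by
  rintro v ⟨γ, hγ, rfl⟩
  refine ⟨Finsupp.single j 1 + γ, fun i hi => ?_, by simp [branch, add_assoc]⟩
  have hij : j ≠ i := fun h => hi (h ▸ hj)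
  have hγi : γ i = 0 := hγ i (by simp [branch, hi])
  simp [hij, hγi]

lemma lt_of_mem_exponents_branch {p : ConeTriple N K} {j : Fin N} {v : Fin N →₀ ℕ}
    (hv : v ∈ exponents (branch p j)) : p.1 j < v j ∧ ∀ i < j, v i = p.1 i := by
  obtain ⟨γ, hγ, rfl⟩ := hv
  refine ⟨by simp [branch]; omega, fun i hij => ?_⟩
  have hγi : γ i = 0 := hγ i (by simp [branch, not_le.2 hij])
  simp [branch, hij.ne', hγi]

lemma exists_mem_pieces_of_mem_exponents {p : ConeTriple N K} {v : Fin N →₀ ℕ}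
    (hv : v ∈ exponents p) : ∃ π ∈ pieces p, v ∈ exponents π := by
  obtain ⟨γ, hγ, rfl⟩ := hv
  by_cases hγ0 : γ = 0
  · exact ⟨apex p, apex_mem_pieces p, by simp [exponents_apex, hγ0]⟩
  -- the first variable on which `γ` is nonzero selects the branch
  have hne : γ.support.Nonempty := Finsupp.support_nonempty_iff.2 hγ0
  set j := γ.support.min' hne
  have hγj : γ j ≠ 0 := Finsupp.mem_support_iff.1 (γ.support.min'_mem hne)
  have hj : j ∈ p.2.1 := by_contra fun h => hγj (hγ j h)
  refine ⟨branch p j, branch_mem_pieces hj, γ - Finsupp.single j 1, fun i hi => ?_, ?_⟩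
  · have hγi : γ i = 0 := by
      by_contra hc
      have hji : j ≤ i := γ.support.min'_le i (Finsupp.mem_support_iff.2 hc)
      exact hi (Finset.mem_filter.2 ⟨by_contra fun hiy => hc (hγ i hiy), hji⟩)
    simp [hγi]
  · ext i
    simp only [branch, Finsupp.add_apply, Finsupp.tsub_apply, Finsupp.single_apply]
    split_ifs with hji
    · subst hji; omega
    · simp

lemma pairwiseDisjoint_exponents_pieces (p : ConeTriple N K) :
    (pieces p : Set (ConeTriple N K)).PairwiseDisjoint exponents := by
  have apex_branch (j : Fin N) : Disjoint (exponents (apex p)) (exponents (branch p j)) := by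
    rw [exponents_apex, Set.disjoint_singleton_left]
    exact fun hv => lt_irrefl _ (lt_of_mem_exponents_branch hv).1
  have branch_branch {j j' : Fin N} (hjj' : j < j') :
      Disjoint (exponents (branch p j)) (exponents (branch p j')) := by
    refine Set.disjoint_left.2 fun v hv hv' => ?_
    have := (lt_of_mem_exponents_branch hv).1
    have := (lt_of_mem_exponents_branch hv').2 j hjj'
    omega
  intro π₁ h₁ π₂ h₂ hne
  rcases mem_pieces.1 h₁ with rfl | ⟨j, -, rfl⟩ <;>
    rcases mem_pieces.1 h₂ with rfl | ⟨j', -, rfl⟩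
  · exact absurd rfl hne
  · exact apex_branch j'
  · exact (apex_branch j).symm
  · rcases lt_trichotomy j j' with h | rfl | h
    · exact branch_branch h
    · exact absurd rfl hne
    · exact (branch_branch h).symm

lemma cone_le_of_mem_pieces {p π : ConeTriple N K} (hπ : π ∈ pieces p) : cone π ≤ cone p := by
  refine cone_mono (snd_snd_of_mem_pieces hπ) ?_
  rcases mem_pieces.1 hπ with rfl | ⟨j, hj, rfl⟩
  · rw [exponents_apex, Set.singleton_subset_iff]
    exact ⟨0, by simp, by simp⟩
  · exact exponents_branch_subset hj

lemma sup_cone_pieces (p : ConeTriple N K) : (pieces p).sup cone = cone p := by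
  refine le_antisymm (Finset.sup_le fun π => cone_le_of_mem_pieces) ?_
  rw [cone, Submodule.span_le]
  rintro _ ⟨γ, hγ, rfl⟩
  obtain ⟨π, hπ, hv⟩ := exists_mem_pieces_of_mem_exponents (p := p) ⟨γ, hγ, rfl⟩
  have := monomial_mul_mem_cone hv
  rw [snd_snd_of_mem_pieces hπ] at this
  exact Finset.le_sup (f := cone) hπ this

lemma supIndep_cone_pieces {p : ConeTriple N K} (hh : p.2.2 ≠ 0) : (pieces p).SupIndep cone :=
  supIndep_cone_of_pairwiseDisjoint hh (fun _ => snd_snd_of_mem_pieces)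
    (pairwiseDisjoint_exponents_pieces p)

lemma coneDeg_apex (p : ConeTriple N K) : coneDeg (apex p) = coneDeg p := rfl

lemma coneDeg_branch (p : ConeTriple N K) (j : Fin N) :
    coneDeg (branch p j) = coneDeg p + 1 := by
  simp only [coneDeg, branch, Finsupp.add_apply, Finset.sum_add_distrib, Finsupp.single_apply,
    Finset.sum_ite_eq, Finset.mem_univ, if_true]
  omega

lemma card_branch_le (p : ConeTriple N K) (j : Fin N) : (branch p j).2.1.card ≤ p.2.1.card :=
  Finset.card_filter_le _ _

lemma branch_min'_snd_fst {p : ConeTriple N K} (hy : p.2.1.Nonempty) :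
    (branch p (p.2.1.min' hy)).2.1 = p.2.1 :=
  Finset.filter_true_of_mem fun i hi => p.2.1.min'_le i hi

lemma exists_branch_eq_of_mem_pieces {p π : ConeTriple N K} (hπ : π ∈ pieces p)
    (hne : π.2.1.Nonempty) : ∃ j ∈ p.2.1, branch p j = π := by
  rcases mem_pieces.1 hπ with rfl | h
  · simp [apex] at hne
  · exact h

lemma card_filter_pieces_le_one (p : ConeTriple N K) :
    ((pieces p).filter fun π => π.2.1.Nonempty ∧ π.2.1.card = p.2.1.card).card ≤ 1 := by
  have key {π : ConeTriple N K} (hπ : π ∈ pieces p) (hne : π.2.1.Nonempty)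
      (hcard : π.2.1.card = p.2.1.card) : ∃ j ∈ p.2.1, (∀ i ∈ p.2.1, j ≤ i) ∧ branch p j = π := by
    obtain ⟨j, hj, rfl⟩ := exists_branch_eq_of_mem_pieces hπ hne
    have hfull : (branch p j).2.1 = p.2.1 :=
      Finset.eq_of_subset_of_card_le (Finset.filter_subset _ _) hcard.ge
    refine ⟨j, hj, fun i hi => ?_, rfl⟩
    rw [← hfull] at hi
    exact (Finset.mem_filter.1 hi).2
  rw [Finset.card_le_one]
  intro a ha b hb
  rw [Finset.mem_filter] at ha hb
  obtain ⟨j, hj, hjmin, rfl⟩ := key ha.1 ha.2.1 ha.2.2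
  obtain ⟨j', hj', hj'min, rfl⟩ := key hb.1 hb.2.1 hb.2.2
  rw [le_antisymm (hjmin j' hj') (hj'min j hj)]

end Pieces

section Refinement

variable {M : Submodule K (MvPolynomial (Fin N) K)} {𝒞 : Finset (ConeTriple N K)}
  {p q : ConeTriple N K}

noncomputable def refineAt (𝒞 : Finset (ConeTriple N K)) (q : ConeTriple N K) :
    Finset (ConeTriple N K) :=
  𝒞.erase q ∪ pieces q

lemma mem_refineAt {r : ConeTriple N K} :
    r ∈ refineAt 𝒞 q ↔ (r ≠ q ∧ r ∈ 𝒞) ∨ r ∈ pieces q := by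
  simp [refineAt]

lemma mem_of_mem_refineAt {r : ConeTriple N K} (hr : r ∈ refineAt 𝒞 q)
    (hrne : r.2.1.Nonempty) (hdeg : coneDeg r ≤ coneDeg q) : r ≠ q ∧ r ∈ 𝒞 := by
  rcases mem_refineAt.1 hr with h | hr
  · exact h
  · obtain ⟨j, -, rfl⟩ := exists_branch_eq_of_mem_pieces hr hrne
    rw [coneDeg_branch] at hdeg
    omega

lemma isConeDecomp_iff : IsConeDecomp 𝒞 M ↔
    (∀ p ∈ 𝒞, p.2.2 ≠ 0 ∧ ∃ e : ℕ, p.2.2.IsHomogeneous e) ∧ 𝒞.sup cone = M ∧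
      𝒞.SupIndep cone := by
  simp only [IsConeDecomp, Finset.supIndep_iff_disjoint_erase, ← Finset.sup_eq_iSup]
  constructor
  · rintro ⟨hh, -, hM, hind⟩
    exact ⟨hh, hM.symm, hind⟩
  · rintro ⟨hh, rfl, hind⟩
    exact ⟨hh, fun p hp => Finset.le_sup hp, rfl, hind⟩

lemma isConeDecomp_refineAt (hdec : IsConeDecomp 𝒞 M) (hq : q ∈ 𝒞) :
    IsConeDecomp (refineAt 𝒞 q) M := by
  rw [isConeDecomp_iff] at hdec ⊢
  obtain ⟨hh, hM, hind⟩ := hdec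
  refine ⟨fun r hr => ?_, ?_, ?_⟩
  · rcases mem_refineAt.1 hr with ⟨-, hr⟩ | hr
    · exact hh r hr
    · rw [snd_snd_of_mem_pieces hr]
      exact hh q hq
  · rw [← hM, refineAt, Finset.sup_union, sup_cone_pieces, sup_comm, ← Finset.sup_insert,
      Finset.insert_erase hq]
  · refine (hind.subset (Finset.erase_subset q 𝒞)).union (supIndep_cone_pieces (hh q hq).1) ?_
    rw [sup_cone_pieces]
    exact (Finset.supIndep_iff_disjoint_erase.1 hind q hq).symm

lemma isStandardDecomp_refineAt {d : ℕ} (hstd : IsStandardDecomp d 𝒞) (hp : p ∈ 𝒞)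
    (hq : q ∈ 𝒞) (hpq : p ≠ q) (hpne : p.2.1.Nonempty) (hqne : q.2.1.Nonempty)
    (hdeg : coneDeg q = coneDeg p) (hcard : q.2.1.card ≤ p.2.1.card) :
    IsStandardDecomp d (refineAt 𝒞 q) := by
  obtain ⟨hlow, hwit⟩ := hstd
  have piece {π : ConeTriple N K} (hπ : π ∈ pieces q) (hne : π.2.1.Nonempty) :
      coneDeg π = coneDeg q + 1 ∧ π.2.1.card ≤ q.2.1.card := by
    obtain ⟨j, -, rfl⟩ := exists_branch_eq_of_mem_pieces hπ hne
    exact ⟨coneDeg_branch q j, card_branch_le q j⟩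
  -- a witness in `𝒞` stays a witness, except `q`, which `p` replaces
  have transfer {s : ConeTriple N K} {c : ℕ} (hs : s ∈ 𝒞) (hsne : s.2.1.Nonempty)
      (hcs : c ≤ s.2.1.card) : ∃ t ∈ refineAt 𝒞 q, t.2.1.Nonempty ∧ coneDeg t = coneDeg s ∧
        c ≤ t.2.1.card := by
    by_cases hsq : s = q
    · subst hsq
      exact ⟨p, mem_refineAt.2 (Or.inl ⟨hpq, hp⟩), hpne, hdeg.symm, hcs.trans hcard⟩
    · exact ⟨s, mem_refineAt.2 (Or.inl ⟨hsq, hs⟩), hsne, rfl, hcs⟩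
  refine ⟨fun r hr hrne => ?_, fun r hr hrne d' hd' hd'r => ?_⟩
  · rcases mem_refineAt.1 hr with ⟨-, hr⟩ | hr
    · exact hlow r hr hrne
    · have := hlow q hq hqne
      have := (piece hr hrne).1
      omega
  rcases mem_refineAt.1 hr with ⟨-, hr⟩ | hr
  · obtain ⟨s, hs, hsne, rfl, hrs⟩ := hwit r hr hrne d' hd' hd'r
    exact transfer hs hsne hrs
  obtain ⟨hrdeg, hrcard⟩ := piece hr hrne
  rcases Nat.lt_or_ge d' (coneDeg q + 1) with hlt | hge
  · obtain ⟨s, hs, hsne, rfl, hqs⟩ := hwit q hq hqne d' hd' (by omega)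
    exact transfer hs hsne (hrcard.trans hqs)
  · have hmin := q.2.1.min'_mem hqne
    refine ⟨branch q (q.2.1.min' hqne), mem_refineAt.2 (Or.inr (branch_mem_pieces hmin)), ?_,
      by rw [coneDeg_branch]; omega, ?_⟩
    · rw [branch_min'_snd_fst]
      exact hqne
    · rw [branch_min'_snd_fst]
      exact hrcard

noncomputable def countAbove (𝒞 : Finset (ConeTriple N K)) (e m : ℕ) : ℕ :=
  (𝒞.filter fun r => r.2.1.Nonempty ∧ e ≤ coneDeg r ∧ r.2.1.card = m).card

lemma countAbove_refineAt_le {e m : ℕ} (hq : q ∈ 𝒞) (hqne : q.2.1.Nonempty)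
    (he : e ≤ coneDeg q) (hm : q.2.1.card ≤ m) :
    countAbove (refineAt 𝒞 q) e m ≤ countAbove 𝒞 e m := by
  set P := fun r : ConeTriple N K => r.2.1.Nonempty ∧ e ≤ coneDeg r ∧ r.2.1.card = m
  set B := (pieces q).filter fun π => π.2.1.Nonempty ∧ π.2.1.card = m
  change ((refineAt 𝒞 q).filter P).card ≤ (𝒞.filter P).card
  have hsub : (refineAt 𝒞 q).filter P ⊆ (𝒞.filter P).erase q ∪ B := by
    intro r hr
    rw [Finset.mem_filter, mem_refineAt] at hr
    rcases hr with ⟨⟨hrq, hr⟩ | hr, hP⟩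
    · exact Finset.mem_union_left _ (Finset.mem_erase.2 ⟨hrq, Finset.mem_filter.2 ⟨hr, hP⟩⟩)
    · exact Finset.mem_union_right _ (Finset.mem_filter.2 ⟨hr, hP.1, hP.2.2⟩)
  refine (Finset.card_le_card hsub).trans ((Finset.card_union_le _ _).trans ?_)
  rcases hm.eq_or_lt with rfl | hlt
  · have hqP : q ∈ 𝒞.filter P := Finset.mem_filter.2 ⟨hq, hqne, he, rfl⟩
    have : B.card ≤ 1 := card_filter_pieces_le_one q
    have := Finset.card_pos.2 ⟨q, hqP⟩
    rw [Finset.card_erase_of_mem hqP]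
    omega
  · have hB : B = ∅ := Finset.filter_eq_empty_iff.2 fun π hπ hP => by
      obtain ⟨j, -, rfl⟩ := exists_branch_eq_of_mem_pieces hπ hP.1
      have := card_branch_le q j
      omega
    rw [hB, Finset.card_empty, add_zero]
    exact Finset.card_erase_le

lemma countAbove_anti {e e' m : ℕ} (h : e ≤ e') : countAbove 𝒞 e' m ≤ countAbove 𝒞 e m :=
  Finset.card_le_card fun r hr => by
    simp only [Finset.mem_filter] at hr ⊢
    exact ⟨hr.1, hr.2.1, h.trans hr.2.2.1, hr.2.2.2⟩

lemma countAbove_succ_lt (hp : p ∈ 𝒞) (hpne : p.2.1.Nonempty) :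
    countAbove 𝒞 (coneDeg p + 1) p.2.1.card < countAbove 𝒞 (coneDeg p) p.2.1.card := by
  refine Finset.card_lt_card ((Finset.ssubset_iff_of_subset ?_).2 ⟨p, ?_, ?_⟩)
  · intro r hr
    simp only [Finset.mem_filter] at hr ⊢
    exact ⟨hr.1, hr.2.1, by omega, hr.2.2.2⟩
  · exact Finset.mem_filter.2 ⟨hp, hpne, le_rfl, rfl⟩
  · simp

end Refinement

section Exactness

variable {M : Submodule K (MvPolynomial (Fin N) K)} {d : ℕ}
  {𝒞 𝒞₁ 𝒞₂ 𝒞₃ : Finset (ConeTriple N K)} {p : ConeTriple N K}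

def IsExactBelow (𝒞 : Finset (ConeTriple N K)) (e : ℕ) : Prop :=
  ∀ p ∈ 𝒞, ∀ q ∈ 𝒞, p.2.1.Nonempty → q.2.1.Nonempty → coneDeg p = coneDeg q →
    coneDeg p < e → p = q

lemma exists_least_duplicate (h : ¬ ∀ e, IsExactBelow 𝒞 e) :
    ∃ e, IsExactBelow 𝒞 e ∧ ∃ r ∈ 𝒞, ∃ s ∈ 𝒞, r.2.1.Nonempty ∧ s.2.1.Nonempty ∧ r ≠ s ∧
      coneDeg r = e ∧ coneDeg s = e := by
  have h' := not_forall.1 h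
  obtain ⟨e₁, he₁, hmin⟩ : ∃ e₁, ¬IsExactBelow 𝒞 e₁ ∧ ∀ e < e₁, IsExactBelow 𝒞 e :=
    ⟨Nat.find h', Nat.find_spec h', fun e he => not_not.1 (Nat.find_min h' he)⟩
  simp only [IsExactBelow, not_forall] at he₁
  obtain ⟨r, hr, s, hs, hrne, hsne, hrs, hlt, hne⟩ := he₁
  exact ⟨coneDeg r, hmin _ hlt, r, hr, s, hs, hrne, hsne, hne, rfl, hrs.symm⟩

def DegreeDominated (𝒞 𝒞' : Finset (ConeTriple N K)) : Prop :=
  ∀ p ∈ 𝒞, ∃ q ∈ 𝒞', coneDeg p ≤ coneDeg q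

lemma DegreeDominated.refl (𝒞 : Finset (ConeTriple N K)) : DegreeDominated 𝒞 𝒞 :=
  fun p hp => ⟨p, hp, le_rfl⟩

lemma DegreeDominated.trans (h₁₂ : DegreeDominated 𝒞₁ 𝒞₂) (h₂₃ : DegreeDominated 𝒞₂ 𝒞₃) :
    DegreeDominated 𝒞₁ 𝒞₃ := fun p hp =>
  let ⟨q, hq, hpq⟩ := h₁₂ p hp
  let ⟨r, hr, hqr⟩ := h₂₃ q hq
  ⟨r, hr, hpq.trans hqr⟩

lemma degreeDominated_refineAt (𝒞 : Finset (ConeTriple N K)) (q : ConeTriple N K) :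
    DegreeDominated 𝒞 (refineAt 𝒞 q) := by
  intro p hp
  by_cases hpq : p = q
  · subst hpq
    exact ⟨apex p, mem_refineAt.2 (Or.inr (apex_mem_pieces p)), (coneDeg_apex p).ge⟩
  · exact ⟨p, mem_refineAt.2 (Or.inl ⟨hpq, hp⟩), le_rfl⟩

noncomputable def rivals (𝒞 : Finset (ConeTriple N K)) (p : ConeTriple N K) :
    Finset (ConeTriple N K) :=
  𝒞.filter fun r => r.2.1.Nonempty ∧ coneDeg r = coneDeg p ∧ r ≠ p

lemma exists_levelled (hdec : IsConeDecomp 𝒞 M) (hstd : IsStandardDecomp d 𝒞)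
    (hexact : IsExactBelow 𝒞 (coneDeg p)) (hp : p ∈ 𝒞) (hpne : p.2.1.Nonempty)
    (hmax : ∀ r ∈ 𝒞, r.2.1.Nonempty → coneDeg r = coneDeg p → r.2.1.card ≤ p.2.1.card) :
    ∃ 𝒞', IsConeDecomp 𝒞' M ∧ IsStandardDecomp d 𝒞' ∧ IsExactBelow 𝒞' (coneDeg p + 1) ∧
      p ∈ 𝒞' ∧ countAbove 𝒞' (coneDeg p) p.2.1.card ≤ countAbove 𝒞 (coneDeg p) p.2.1.card ∧
      DegreeDominated 𝒞 𝒞' := by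
  obtain ⟨k, hk⟩ : ∃ k, (rivals 𝒞 p).card = k := ⟨_, rfl⟩
  induction k using Nat.strong_induction_on generalizing 𝒞 with
  | _ k ih =>
  rcases (rivals 𝒞 p).eq_empty_or_nonempty with hnone | ⟨q, hq⟩
  · refine ⟨𝒞, hdec, hstd, fun r hr s hs hrne hsne hrs hlt => ?_, hp, le_rfl, .refl 𝒞⟩
    have eq_p {t : ConeTriple N K} (ht : t ∈ 𝒞) (htne : t.2.1.Nonempty)
        (htdeg : coneDeg t = coneDeg p) : t = p := by
      by_contra htp
      have : t ∈ rivals 𝒞 p := Finset.mem_filter.2 ⟨ht, htne, htdeg, htp⟩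
      simp [hnone] at this
    rcases (Nat.lt_succ_iff.1 hlt).lt_or_eq with hlt | heq
    · exact hexact r hr s hs hrne hsne hrs hlt
    · rw [eq_p hr hrne heq, eq_p hs hsne (hrs ▸ heq)]
  obtain ⟨hq, hqne, hqdeg, hqp⟩ := Finset.mem_filter.1 hq
  have hqmax := hmax q hq hqne hqdeg
  have hlow {r : ConeTriple N K} (hr : r ∈ refineAt 𝒞 q) (hrne : r.2.1.Nonempty)
      (hdeg : coneDeg r ≤ coneDeg p) : r ∈ 𝒞 :=
    (mem_of_mem_refineAt hr hrne (hqdeg ▸ hdeg)).2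
  have hrivals : (rivals (refineAt 𝒞 q) p).card < k := by
    refine hk ▸ Finset.card_lt_card (Finset.ssubset_of_subset_of_ssubset ?_
      (Finset.erase_ssubset (Finset.mem_filter.2 ⟨hq, hqne, hqdeg, hqp⟩)))
    intro r hr
    obtain ⟨hr, hrne, hrdeg, hrp⟩ := Finset.mem_filter.1 hr
    obtain ⟨hrq, hr⟩ := mem_of_mem_refineAt hr hrne (hqdeg ▸ hrdeg).le
    exact Finset.mem_erase.2 ⟨hrq, Finset.mem_filter.2 ⟨hr, hrne, hrdeg, hrp⟩⟩
  obtain ⟨𝒞', hdec', hstd', hexact', hp', hcount', hdom'⟩ := ih _ hrivals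
    (isConeDecomp_refineAt hdec hq)
    (isStandardDecomp_refineAt hstd hp hq (Ne.symm hqp) hpne hqne hqdeg hqmax)
    (fun r hr s hs hrne hsne hrs hlt =>
      hexact r (hlow hr hrne hlt.le) s (hlow hs hsne (hrs ▸ hlt).le) hrne hsne hrs hlt)
    (mem_refineAt.2 (Or.inl ⟨Ne.symm hqp, hp⟩))
    (fun r hr hrne hrdeg => hmax r (hlow hr hrne hrdeg.le) hrne hrdeg) rfl
  exact ⟨𝒞', hdec', hstd', hexact', hp',
    hcount'.trans (countAbove_refineAt_le hq hqne hqdeg.ge hqmax),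
    (degreeDominated_refineAt 𝒞 q).trans hdom'⟩

lemma exists_exact_of_isExactBelow (m c e : ℕ) (hdec : IsConeDecomp 𝒞 M)
    (hstd : IsStandardDecomp d 𝒞) (hexact : IsExactBelow 𝒞 e)
    (hm : ∀ r ∈ 𝒞, r.2.1.Nonempty → e ≤ coneDeg r → r.2.1.card ≤ m)
    (hc : countAbove 𝒞 e m ≤ c) :
    ∃ 𝒟, IsConeDecomp 𝒟 M ∧ IsStandardDecomp d 𝒟 ∧ IsExactDecomp 𝒟 ∧ DegreeDominated 𝒞 𝒟 := by
  induction m using Nat.strong_induction_on generalizing c e 𝒞 with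
  | _ m ihm =>
  induction c using Nat.strong_induction_on generalizing e 𝒞 with
  | _ c ihc =>
  by_cases hall : ∀ e', IsExactBelow 𝒞 e'
  · refine ⟨𝒞, hdec, hstd, ⟨⟨d, hstd⟩, fun r hr s hs hrne hsne hrs => ?_⟩, .refl 𝒞⟩
    exact hall (coneDeg r + 1) r hr s hs hrne hsne hrs (Nat.lt_succ_self _)
  obtain ⟨e₀, hexact₀, r₀, hr₀, s₀, hs₀, hr₀ne, hs₀ne, hrs₀, hr₀deg, hs₀deg⟩ :=
    exists_least_duplicate hall
  have hee₀ : e ≤ e₀ := by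
    by_contra! hlt
    exact hrs₀ (hexact r₀ hr₀ s₀ hs₀ hr₀ne hs₀ne (hr₀deg.trans hs₀deg.symm) (hr₀deg ▸ hlt))
  obtain ⟨p, hpA, hpmax⟩ := (𝒞.filter fun r => r.2.1.Nonempty ∧ coneDeg r = e₀).exists_max_image
    (fun r => r.2.1.card) ⟨r₀, Finset.mem_filter.2 ⟨hr₀, hr₀ne, hr₀deg⟩⟩
  obtain ⟨hp, hpne, rfl⟩ := Finset.mem_filter.1 hpA
  obtain ⟨𝒞', hdec', hstd', hexact', hp', hcount', hdom'⟩ := exists_levelled hdec hstd hexact₀ hp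
    hpne fun r hr hrne hrdeg => hpmax r (Finset.mem_filter.2 ⟨hr, hrne, hrdeg⟩)
  -- the witness at degree `coneDeg p` demanded by standardness can only be `p`
  have hm' : ∀ r ∈ 𝒞', r.2.1.Nonempty → coneDeg p + 1 ≤ coneDeg r →
      r.2.1.card ≤ p.2.1.card := by
    intro r hr hrne hrdeg
    obtain ⟨s, hs, hsne, hsdeg, hrs⟩ :=
      hstd'.2 r hr hrne (coneDeg p) (hstd.1 p hp hpne) (by omega)
    rwa [hexact' s hs p hp' hsne hpne hsdeg (by omega)] at hrs
  suffices ∃ 𝒟, IsConeDecomp 𝒟 M ∧ IsStandardDecomp d 𝒟 ∧ IsExactDecomp 𝒟 ∧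
      DegreeDominated 𝒞' 𝒟 from
    this.imp fun 𝒟 h => ⟨h.1, h.2.1, h.2.2.1, hdom'.trans h.2.2.2⟩
  rcases (hm p hp hpne hee₀).lt_or_eq with hlt | rfl
  · exact ihm _ hlt _ _ hdec' hstd' hexact' hm' le_rfl
  · refine ihc _ ?_ _ hdec' hstd' hexact' hm' le_rfl
    calc countAbove 𝒞' (coneDeg p + 1) p.2.1.card
        < countAbove 𝒞' (coneDeg p) p.2.1.card := countAbove_succ_lt hp' hpne
      _ ≤ countAbove 𝒞 (coneDeg p) p.2.1.card := hcount'
      _ ≤ countAbove 𝒞 e p.2.1.card := countAbove_anti hee₀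
      _ ≤ c := hc

end Exactness

lemma lt_macaulay_zero {𝒟 : Finset (ConeTriple N K)} {q : ConeTriple N K} (hq : q ∈ 𝒟) :
    coneDeg q < macaulay 𝒟 0 := by
  have hall : (𝒟.filter fun p => 0 ≤ p.2.1.card) = 𝒟 :=
    Finset.filter_true_of_mem fun _ _ => Nat.zero_le _
  rw [macaulay, hall, if_pos ⟨q, hq⟩]
  exact lt_max_of_lt_right (Nat.lt_one_add_iff.2 (Finset.le_sup hq))

end ConeDecompositions

theorem exists_exact_standard_decomposition_general {K : Type*} [Field K]
    {N : ℕ} (M : Submodule K (MvPolynomial (Fin N) K))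
    (d : ℕ) (𝒟 : Finset (ConeTriple N K))
    (hdec : IsConeDecomp 𝒟 M) (hstd : IsStandardDecomp d 𝒟) :
    ∃ 𝒟' : Finset (ConeTriple N K),
      IsConeDecomp 𝒟' M ∧ IsStandardDecomp d 𝒟' ∧ IsExactDecomp 𝒟' ∧
      ∀ p ∈ 𝒟, coneDeg p < macaulay 𝒟' 0 := by
  have hexact : IsExactBelow 𝒟 0 := fun _ _ _ _ _ _ _ h => absurd h (Nat.not_lt_zero _)
  have hdim (r : ConeTriple N K) : r.2.1.card ≤ N :=
    (Finset.card_le_univ _).trans (Fintype.card_fin N).le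
  obtain ⟨𝒟', hdec', hstd', hexact', hdom⟩ :=
    exists_exact_of_isExactBelow N _ 0 hdec hstd hexact (fun r _ _ _ => hdim r) le_rfl
  refine ⟨𝒟', hdec', hstd', hexact', fun p hp => ?_⟩
  obtain ⟨q, hq, hpq⟩ := hdom p hp
  exact hpq.trans_lt (lt_macaulay_zero hq)

theorem exists_exact_standard_decomposition {K : Type*} [Field K]
    {N : ℕ} (hN : 1 ≤ N) (M : Submodule K (MvPolynomial (Fin N) K))
    (hM : IsHomogeneousSubspace M)
    (d : ℕ) (𝒟 : Finset (ConeTriple N K))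
    (hdec : IsConeDecomp 𝒟 M) (hstd : IsStandardDecomp d 𝒟) :
    ∃ 𝒟' : Finset (ConeTriple N K),
      IsConeDecomp 𝒟' M ∧ IsStandardDecomp d 𝒟' ∧ IsExactDecomp 𝒟' ∧
      ∀ p ∈ 𝒟, coneDeg p < macaulay 𝒟' 0 :=
  exists_exact_standard_decomposition_general M d 𝒟 hdec hstd
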